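/- Let S₀ and S be countable sets, let x₀ ∈ S₀, and let f : S₀ × S₀ → ℝ be a unit flux from x₀: f is antisymmetric, Σ_{y∈S₀} |f(x,y)| < ∞ for every x ∈ S₀, and Σ_{y∈S₀} f(x,y) equals 1 if x = x₀ and 0 otherwise. Let φ : S₀ → S be a map all of whose fibers V_u := φ^{−1}(u) are finite, write N(u) := |V_u|, and let r : S × S → [0,∞) be symmetric. Define θ(u,v) := Σ_{x∈V_u} Σ_{y∈V_v} f(x,y) for u,v ∈ S. Then θ is a unit flux from φ(x₀) on S (antisymmetric, with absolutely convergent row sums equal to 1 at φ(x₀) and 0 elsewhere), and its energy satisfies (1/2)·Σ_{u,v∈S, u≠v} r(u,v)·θ(u,v)² ≤ (1/2)·Σ_{x,y∈S₀, x≠y} f(x,y)²·N(φ(x))·N(φ(y))·r(φ(x),φ(y)). -/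

import Mathlib

/-!
All sums over fibres of `φ` are finite. The row `θ(u, ·)` is the finite sum over `x ∈ φ⁻¹(u)` of
the series `f(x, ·)` regrouped along the fibres of `φ`, which gives absolute convergence and the
divergence. For `u ≠ v`, Cauchy–Schwarz on `φ⁻¹(u) × φ⁻¹(v)` bounds `θ(u,v)²` by
`N(u) N(v) Σ f(x,y)²`, and these blocks are exactly the fibres of `φ × φ` in the energy sum.
-/

open scoped BigOperators

/-- The image flux `θ(u,v) = Σ_{x∈φ⁻¹(u)} Σ_{y∈φ⁻¹(v)} f(x,y)`. -/
noncomputable def pushFlux {S₀ S : Type*} (φ : S₀ → S) (f : S₀ → S₀ → ℝ) (u v : S) : ℝ :=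
  ∑' (x : φ ⁻¹' {u}) (y : φ ⁻¹' {v}), f (x : S₀) (y : S₀)

open Finset

theorem Set.Finite.tsum_subtype {β M : Type*} [AddCommMonoid M] [TopologicalSpace M]
    {s : Set β} (hs : s.Finite) (g : β → M) : ∑' x : s, g x = ∑ x ∈ hs.toFinset, g x := by
  have h := Finset.tsum_subtype' hs.toFinset g
  rwa [hs.coe_toFinset] at h

theorem ENNReal.tsum_le_tsum_of_le_tsum_fiber {α β : Type*} {g : β → ENNReal} {G : α → ENNReal}
    (ψ : α → β) (h : ∀ b, g b ≤ ∑' a : ψ ⁻¹' {b}, G a) : ∑' b, g b ≤ ∑' a, G a :=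
  (ENNReal.tsum_le_tsum h).trans_eq (ENNReal.tsum_fiberwise G ψ)

section pushFlux

variable {S₀ S : Type*} {φ : S₀ → S} {f : S₀ → S₀ → ℝ} {u v : S}

theorem pushFlux_eq_sum_tsum (hu : (φ ⁻¹' {u}).Finite) (f : S₀ → S₀ → ℝ) (v : S) :
    pushFlux φ f u v = ∑ x ∈ hu.toFinset, ∑' y : φ ⁻¹' {v}, f x y :=
  hu.tsum_subtype fun x => ∑' y : φ ⁻¹' {v}, f x y

theorem pushFlux_eq_sum_product (hu : (φ ⁻¹' {u}).Finite) (hv : (φ ⁻¹' {v}).Finite)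
    (f : S₀ → S₀ → ℝ) :
    pushFlux φ f u v = ∑ p ∈ hu.toFinset ×ˢ hv.toFinset, f p.1 p.2 := by
  simp only [pushFlux_eq_sum_tsum hu, hv.tsum_subtype, sum_product]

theorem pushFlux_antisymm (hfib : ∀ u : S, (φ ⁻¹' {u}).Finite)
    (hanti : ∀ x y, f x y = -f y x) (u v : S) :
    pushFlux φ f u v = -pushFlux φ f v u := by
  simp only [pushFlux_eq_sum_product (hfib _) (hfib _), sum_product, ← sum_neg_distrib]
  rw [sum_comm]
  exact sum_congr rfl fun _ _ => sum_congr rfl fun _ _ => hanti _ _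

theorem abs_pushFlux_le (hu : (φ ⁻¹' {u}).Finite) (hv : (φ ⁻¹' {v}).Finite) :
    |pushFlux φ f u v| ≤ pushFlux φ (fun x y => |f x y|) u v := by
  rw [pushFlux_eq_sum_product hu hv, pushFlux_eq_sum_product hu hv]
  exact abs_sum_le_sum_abs _ _

theorem hasSum_pushFlux (hu : (φ ⁻¹' {u}).Finite) {a : S₀ → ℝ}
    (hf : ∀ x, HasSum (f x) (a x)) :
    HasSum (fun v => pushFlux φ f u v) (∑ x ∈ hu.toFinset, a x) := by
  simp only [pushFlux_eq_sum_tsum hu]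
  exact hasSum_sum fun x _ => (hf x).tsum_fiberwise φ

theorem summable_abs_pushFlux (hfib : ∀ u : S, (φ ⁻¹' {u}).Finite)
    (habs : ∀ x, Summable fun y => |f x y|) (u : S) :
    Summable fun v => |pushFlux φ f u v| :=
  (hasSum_pushFlux (hfib u) fun x => (habs x).hasSum).summable.of_nonneg_of_le
    (fun _ => abs_nonneg _) fun v => abs_pushFlux_le (hfib u) (hfib v)

theorem hasSum_pushFlux_of_unit_flux [DecidableEq S₀] [DecidableEq S] {x₀ : S₀}
    (hu : (φ ⁻¹' {u}).Finite) (habs : ∀ x, Summable fun y => |f x y|)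
    (hdiv : ∀ x, ∑' y, f x y = if x = x₀ then 1 else 0) :
    HasSum (fun v => pushFlux φ f u v) (if u = φ x₀ then 1 else 0) := by
  convert hasSum_pushFlux hu fun x => (habs x).of_abs.hasSum
  simp only [hdiv, sum_ite_eq, hu.mem_toFinset, Set.mem_preimage, Set.mem_singleton_iff,
    eq_comm]

theorem ofReal_mul_sq_pushFlux_le (hu : (φ ⁻¹' {u}).Finite) (hv : (φ ⁻¹' {v}).Finite)
    {c : ℝ} (hc : 0 ≤ c) :
    ENNReal.ofReal (c * pushFlux φ f u v ^ 2) ≤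
      ∑' p : Prod.map φ φ ⁻¹' {(u, v)}, ENNReal.ofReal
        (f p.1.1 p.1.2 ^ 2 * Nat.card (φ ⁻¹' {u}) * Nat.card (φ ⁻¹' {v}) * c) := by
  have hfiber : Prod.map φ φ ⁻¹' {(u, v)} = (φ ⁻¹' {u}) ×ˢ (φ ⁻¹' {v}) := by
    rw [← Set.singleton_prod_singleton, Set.preimage_prod_map_prod]
  rw [hfiber, (hu.prod hv).tsum_subtype fun p : S₀ × S₀ => ENNReal.ofReal (f p.1 p.2 ^ 2 * _ * _ * c),
    ← ENNReal.ofReal_sum_of_nonneg (fun _ _ => by positivity),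
    ← hu.toFinset_prod hv, Nat.card_eq_card_finite_toFinset hu,
    Nat.card_eq_card_finite_toFinset hv, pushFlux_eq_sum_product hu hv]
  gcongr
  calc c * (∑ p ∈ hu.toFinset ×ˢ hv.toFinset, f p.1 p.2) ^ 2
      ≤ c * (#(hu.toFinset ×ˢ hv.toFinset) * ∑ p ∈ hu.toFinset ×ˢ hv.toFinset, f p.1 p.2 ^ 2) := by
        gcongr; exact sq_sum_le_card_mul_sum_sq
    _ = ∑ p ∈ hu.toFinset ×ˢ hv.toFinset, f p.1 p.2 ^ 2 * #hu.toFinset * #hv.toFinset * c := by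
        rw [card_product, mul_sum, mul_sum]
        exact sum_congr rfl fun _ _ => by push_cast; ring

theorem pushFlux_energy_le [DecidableEq S₀] [DecidableEq S] (hfib : ∀ u : S, (φ ⁻¹' {u}).Finite)
    {r : S → S → ℝ} (hr : ∀ u v, 0 ≤ r u v) :
    ∑' p : S × S,
        ENNReal.ofReal (if p.1 ≠ p.2 then r p.1 p.2 * pushFlux φ f p.1 p.2 ^ 2 else 0) ≤
      ∑' p : S₀ × S₀,
        ENNReal.ofReal (if p.1 ≠ p.2 then
          f p.1 p.2 ^ 2 * (Nat.card (φ ⁻¹' {φ p.1}) : ℝ) * (Nat.card (φ ⁻¹' {φ p.2}) : ℝ) *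
            r (φ p.1) (φ p.2)
        else 0) := by
  refine ENNReal.tsum_le_tsum_of_le_tsum_fiber (Prod.map φ φ) fun ⟨u, v⟩ => ?_
  by_cases huv : u = v
  · simp [huv]
  calc _ = ENNReal.ofReal (r u v * pushFlux φ f u v ^ 2) := by simp [huv]
    _ ≤ _ := ofReal_mul_sq_pushFlux_le (hfib u) (hfib v) (hr u v)
    _ = _ := tsum_congr fun ⟨⟨x, y⟩, hxy⟩ => by
        obtain ⟨rfl, rfl⟩ : φ x = u ∧ φ y = v := by simpa using hxy
        have hxy : x ≠ y := fun h => huv (h ▸ rfl)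
        simp [hxy]

end pushFlux

theorem pushFlux_unit_flux_and_energy {S₀ S : Type*}
    [DecidableEq S₀] [DecidableEq S]
    (x₀ : S₀) (f : S₀ → S₀ → ℝ)
    (hanti : ∀ x y : S₀, f x y = - f y x)
    (habs : ∀ x : S₀, Summable (fun y : S₀ => |f x y|))
    (hdiv : ∀ x : S₀, ∑' y : S₀, f x y = if x = x₀ then 1 else 0)
    (φ : S₀ → S) (hfib : ∀ u : S, (φ ⁻¹' {u}).Finite)
    (r : S → S → ℝ)
    (hrnonneg : ∀ u v : S, 0 ≤ r u v) :
    (∀ u v : S, pushFlux φ f u v = - pushFlux φ f v u) ∧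
    (∀ u : S, Summable (fun v : S => |pushFlux φ f u v|)) ∧
    (∀ u : S, ∑' v : S, pushFlux φ f u v = if u = φ x₀ then 1 else 0) ∧
    (1 / 2 : ENNReal) * ∑' p : S × S,
        ENNReal.ofReal (if p.1 ≠ p.2 then r p.1 p.2 * pushFlux φ f p.1 p.2 ^ 2 else 0) ≤
      (1 / 2 : ENNReal) * ∑' p : S₀ × S₀,
        ENNReal.ofReal (if p.1 ≠ p.2 then
          f p.1 p.2 ^ 2 * (Nat.card (φ ⁻¹' {φ p.1}) : ℝ) * (Nat.card (φ ⁻¹' {φ p.2}) : ℝ) *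
            r (φ p.1) (φ p.2)
        else 0) :=
  ⟨pushFlux_antisymm hfib hanti, summable_abs_pushFlux hfib habs,
    fun u => (hasSum_pushFlux_of_unit_flux (hfib u) habs hdiv).tsum_eq,
    mul_le_mul_right (pushFlux_energy_le hfib hrnonneg) _⟩
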